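/- Let (S_1,…,S_k) be an increasing ordered partition of [n] of type (n_1,…,n_k) and let σ be a permutation of [n]. Then 1_{(S_1,…,S_k)} ∘ 1_σ = 1_{({1},…,{n})} if and only if D(σ^{-1}) ⊆ {n_1, n_1+n_2, …, n_1+⋯+n_{k-1}}; equivalently, the permutations σ with 1_{(S_1,…,S_k)} ∘ 1_σ = 1_{({1},…,{n})} are exactly the inverses of the permutations whose descent set is contained in {n_1, n_1+n_2, …, n_1+⋯+n_{k-1}}. -/

import Mathlib

/-!
Twisted descent algebras and the Solomon-Tits algebra (Patras-Schocker).

* A *packed sequence* is a finite sequence of pairwise disjoint nonempty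
  finite subsets of ℕ.
* `TD k` is the free twisted descent algebra `𝒯`: the free `k`-module with
  basis `1_w`, `w` a packed sequence.
* `convL` is the convolution product `∗`, `compL` the composition product `∘`,
  `deltaL` the coproduct `δ`.
* `TD k` also realizes the free twisted bialgebra `ℬ` (whose basis words
  `α_{S_1}⋯α_{S_k}` are exactly the packed sequences); `Tmap u` realizes the
  convolution `1_{U_1} ∗ ⋯ ∗ 1_{U_l}` of characteristic maps as an
  endomorphism of `ℬ`; `BS k S` is the graded piece `ℬ_S` with concatenation
  `mulInto` and deconcatenation `deltaInto`.
-/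

open scoped TensorProduct

noncomputable section
namespace TwistedDescent

/-- A sequence of finite subsets of `ℕ`. -/
abbrev PSeq : Type := List (Finset ℕ)

/-- A packed sequence: a finite sequence of pairwise disjoint nonempty finite
subsets of `ℕ`. -/
def Packed (w : PSeq) : Prop :=
  w.Pairwise (fun S T => Disjoint S T) ∧ ∀ S ∈ w, S ≠ ∅

instance : DecidablePred Packed := fun w => by unfold Packed; infer_instance

/-- The type of packed sequences. -/
abbrev PackedSeq : Type := {w : PSeq // Packed w}

/-- The free twisted descent algebra `𝒯`: the free `k`-module with basis the
packed sequences.  (The same module realizes the free twisted bialgebra `ℬ`,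
whose basis words are the packed sequences.) -/
abbrev TD (k : Type) [CommRing k] : Type := PackedSeq →₀ k

variable (k : Type) [CommRing k]

/-- The basis element `1_l` of `𝒯` if `l` is packed, and `0` otherwise. -/
def mk (l : PSeq) : TD k := if h : Packed l then Finsupp.single ⟨l, h⟩ 1 else 0

/-- The union `S_1 ∪ ⋯ ∪ S_k` of the members of a sequence of sets. -/
def unionOf (w : PSeq) : Finset ℕ := w.foldr (· ∪ ·) ∅

/-- The convolution product `∗` on `𝒯`, as a bilinear map:
`1_{(S_1,…,S_n)} ∗ 1_{(T_1,…,T_m)} = 1_{(S_1,…,S_n,T_1,…,T_m)}` if all the sets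
are pairwise disjoint, and `0` otherwise. -/
def convL : TD k →ₗ[k] TD k →ₗ[k] TD k :=
  Finsupp.lsum k fun w => LinearMap.toSpanSingleton k _ <|
    Finsupp.lsum k fun v => LinearMap.toSpanSingleton k _ (mk k (w.1 ++ v.1))

/-- The refinement `(S_1∩T_1,…,S_1∩T_k,…,S_n∩T_1,…,S_n∩T_k)` of two sequences,
with all empty intersections deleted. -/
def refines (w v : PSeq) : PSeq :=
  w.flatMap fun S => (v.map fun U => S ∩ U).filter fun U => U ≠ ∅

/-- The composition product on basis elements: `0` if the underlying sets
differ, and the refinement otherwise. -/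
def compB (w v : PSeq) : TD k :=
  if unionOf w = unionOf v then mk k (refines w v) else 0

/-- The composition product `∘` on `𝒯`, as a bilinear map. -/
def compL : TD k →ₗ[k] TD k →ₗ[k] TD k :=
  Finsupp.lsum k fun w => LinearMap.toSpanSingleton k _ <|
    Finsupp.lsum k fun v => LinearMap.toSpanSingleton k _ (compB k w.1 v.1)

instance : Zero (TD k ⊗[k] TD k) :=
  (inferInstance : AddZeroClass (TD k ⊗[k] TD k)).toZero

/-- All ways of splitting each block `S_i` of `w` into an ordered pair
`(T_i, U_i)` with `S_i = T_i ⊔ U_i`. -/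
def splittings (w : PSeq) : List (List (Finset ℕ × Finset ℕ)) :=
  (w.map fun S => S.powerset.toList.map fun U => (U, S \ U)).sections

/-- Delete all empty sets from a sequence. -/
def strip (l : PSeq) : PSeq := l.filter fun S => S ≠ ∅

/-- The coproduct on a basis element:
`δ(1_{(S_1,…,S_k)}) = Σ 1_{(T_1,…,T_k)^} ⊗ 1_{(U_1,…,U_k)^}` summed over all
ways of writing `S_i = T_i ⊔ U_i`, where `^` deletes empty sets. -/
def deltaB (w : PackedSeq) : TD k ⊗[k] TD k :=
  ((splittings w.1).map fun p =>
    (mk k (strip (p.map Prod.fst)) ⊗ₜ[k] mk k (strip (p.map Prod.snd)) :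
      TD k ⊗[k] TD k)).sum

/-- The coproduct `δ : 𝒯 → 𝒯 ⊗ 𝒯`. -/
def deltaL : TD k →ₗ[k] TD k ⊗[k] TD k :=
  Finsupp.lsum k fun w => LinearMap.toSpanSingleton k _ (deltaB k w)

/-- The componentwise convolution `∗₂` on `𝒯 ⊗ 𝒯`:
`(a⊗b) ∗₂ (c⊗d) = (a∗c)⊗(b∗d)`. -/
def conv2 : TD k ⊗[k] TD k →ₗ[k] TD k ⊗[k] TD k →ₗ[k] TD k ⊗[k] TD k :=
  (TensorProduct.homTensorHomMap (RingHom.id k) _ _ _ _).comp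
    (TensorProduct.map (convL k) (convL k))

/-- The componentwise composition `∘₂` on `𝒯 ⊗ 𝒯`:
`(a⊗b) ∘₂ (c⊗d) = (a∘c)⊗(b∘d)`. -/
def comp2 : TD k ⊗[k] TD k →ₗ[k] TD k ⊗[k] TD k →ₗ[k] TD k ⊗[k] TD k :=
  (TensorProduct.homTensorHomMap (RingHom.id k) _ _ _ _).comp
    (TensorProduct.map (compL k) (compL k))

/-- The linear map `μ : 𝒯 ⊗ 𝒯 → 𝒯` induced by the convolution product. -/
def muL : TD k ⊗[k] TD k →ₗ[k] TD k := TensorProduct.lift (convL k)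

/-- The submodule `𝒯_S` of `𝒯` spanned by the basis elements `1_w` with `w` an
ordered partition of `S`. -/
def TS (S : Finset ℕ) : Submodule k (TD k) :=
  Submodule.span k {x | ∃ w : PackedSeq, unionOf w.1 = S ∧ x = Finsupp.single w 1}

/-- The blocks of `w` contained in `U_1`, in their original relative order,
then those contained in `U_2`, and so on. -/
def reorder (u w : PSeq) : PSeq := u.flatMap fun U => w.filter fun S => S ⊆ U

/-- Action of `T_u = 1_{U_1} ∗ ⋯ ∗ 1_{U_l}` on a basis word of `ℬ`: the word is
killed unless it has degree `∪ U_j` and each of its blocks is contained in some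
`U_j`, in which case the blocks are regrouped along `u`. -/
def TmapB (u : PSeq) (w : PackedSeq) : TD k :=
  if unionOf w.1 = unionOf u ∧ ∀ S ∈ w.1, ∃ U ∈ u, S ⊆ U then mk k (reorder u w.1)
  else 0

/-- The endomorphism `T_u = 1_{U_1} ∗ ⋯ ∗ 1_{U_l}` of the free twisted
bialgebra `ℬ`. -/
def Tmap (u : PSeq) : Module.End k (TD k) :=
  Finsupp.lsum k fun w => LinearMap.toSpanSingleton k _ (TmapB k u w)

/-- Ordered partitions of the finite set `S`. -/
def OrdPart (S : Finset ℕ) : Type := {w : PSeq // Packed w ∧ unionOf w = S}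

/-- The graded component `ℬ_S`: the free `k`-module on the ordered partitions
of `S`. -/
abbrev BS (S : Finset ℕ) : Type := OrdPart S →₀ k

/-- Basis element of `ℬ_S`, or `0` if `l` is not an ordered partition of `S`. -/
def mkS (S : Finset ℕ) (l : PSeq) : BS k S :=
  if h : Packed l ∧ unionOf l = S then Finsupp.single ⟨l, h⟩ 1 else 0

instance (S S' : Finset ℕ) : Zero (BS k S ⊗[k] BS k S') :=
  (inferInstance : AddZeroClass (BS k S ⊗[k] BS k S')).toZero

/-- Concatenation `m_{U,V} : ℬ_U ⊗ ℬ_V → ℬ_S` (nonzero only when `U ⊔ V = S`),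
as a bilinear map. -/
def mulInto (U V S : Finset ℕ) : BS k U →ₗ[k] BS k V →ₗ[k] BS k S :=
  Finsupp.lsum k fun w => LinearMap.toSpanSingleton k _ <|
    Finsupp.lsum k fun v => LinearMap.toSpanSingleton k _ (mkS k S (w.1 ++ v.1))

/-- Deconcatenation `δ_{U,V} : ℬ_S → ℬ_U ⊗ ℬ_V` (intended for `S = U ⊔ V`):
a basis word goes to `w_U ⊗ w_V` if each of its blocks is contained in `U` or
in `V`, where `w_U` (resp. `w_V`) is the subsequence of blocks contained in `U`
(resp. `V`), and to `0` otherwise. -/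
def deltaInto (S U V : Finset ℕ) : BS k S →ₗ[k] BS k U ⊗[k] BS k V :=
  Finsupp.lsum k fun w => LinearMap.toSpanSingleton k _ <|
    if ∀ B ∈ w.1, B ⊆ U ∨ B ⊆ V then
      mkS k U (w.1.filter fun B => B ⊆ U) ⊗ₜ[k] mkS k V (w.1.filter fun B => B ⊆ V)
    else 0

/-- Graded endomorphisms of `ℬ`: families `(f_S)_S` of endomorphisms of the
graded components `ℬ_S`. -/
abbrev GEnd : Type := (S : Finset ℕ) → Module.End k (BS k S)

/-- The convolution of graded endomorphisms:
`(f∗g)_S = Σ_{U ⊔ V = S} m_{U,V} ∘ (f_U ⊗ g_V) ∘ δ_{U,V}`. -/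
def gconv (f g : GEnd k) : GEnd k := fun S =>
  ∑ U ∈ S.powerset,
    (TensorProduct.lift (mulInto k U (S \ U) S)).comp
      ((TensorProduct.map (f U) (g (S \ U))).comp (deltaInto k S U (S \ U)))

/-- The characteristic map `1_∅`: the identity on `ℬ_∅` and `0` on `ℬ_S` for
`S ≠ ∅`. -/
def gone : GEnd k := fun S => if S = ∅ then LinearMap.id else 0

/-- `1_C(S)`: the sum of all `1_w`, `w` an ordered partition of `S` of
type `C`. -/
def oneC (C : List ℕ) (S : Finset ℕ) : TD k :=
  ∑ᶠ w : PackedSeq,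
    if unionOf w.1 = S ∧ w.1.map Finset.card = C then Finsupp.single w (1 : k) else 0

/-- The composition obtained by reading a matrix of nonnegative integers row by
row and deleting all zero entries. -/
def matComp {r c : ℕ} (a : Fin r → Fin c → ℕ) : List ℕ :=
  (List.finRange r).flatMap fun i =>
    ((List.finRange c).map fun j => a i j).filter fun m => m ≠ 0

/-- `σ` is a permutation of `[n] = {1,…,n}`: it fixes everything outside
`{1,…,n}` (and hence permutes `{1,…,n}`). -/
def IsPermOn (n : ℕ) (σ : Equiv.Perm ℕ) : Prop := ∀ m ∉ Finset.Icc 1 n, σ m = m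

/-- The sequence `({σ(1)},…,{σ(n)})` of singletons, written `1_σ` in `𝒯`. -/
def permList (n : ℕ) (σ : Equiv.Perm ℕ) : PSeq :=
  (List.range n).map fun i => {σ (i + 1)}

/-- An ordered partition `(S_1,…,S_k)` is increasing if `s < s'` whenever
`s ∈ S_i`, `s' ∈ S_j` and `i < j`. -/
def Increasing (w : PSeq) : Prop := w.Pairwise fun S T => ∀ s ∈ S, ∀ t ∈ T, s < t

/-- `σ` is a shuffle of `(S_1,…,S_k)`: the elements of each `S_i` occur in
increasing order in the sequence `(σ(1),…,σ(n))`. -/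
def IsShuffle (n : ℕ) (w : PSeq) (σ : Equiv.Perm ℕ) : Prop :=
  ∀ S ∈ w, ∀ i j : ℕ, 1 ≤ i → i < j → j ≤ n → σ i ∈ S → σ j ∈ S → σ i < σ j

/-- The descent set `D(τ) = {i | 1 ≤ i ≤ n-1, τ(i) > τ(i+1)}` of a permutation
of `[n]`. -/
def Des (n : ℕ) (τ : Equiv.Perm ℕ) : Set ℕ := {i | 1 ≤ i ∧ i < n ∧ τ (i + 1) < τ i}

/-- The right action of a permutation `σ`:
`1_{(S_1,…,S_k)}·σ = 1_{(σ⁻¹(S_1),…,σ⁻¹(S_k))}`, extended linearly. -/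
def actL (σ : Equiv.Perm ℕ) : TD k →ₗ[k] TD k :=
  Finsupp.lsum k fun w =>
    LinearMap.toSpanSingleton k _ (mk k (w.1.map fun S => S.image ⇑σ⁻¹))


/-! ### Auxiliary lemmas for Statement 16 -/

section Aux16

lemma Equiv.Perm.apply_inv_self (σ : Equiv.Perm ℕ) (x : ℕ) : σ (σ⁻¹ x) = x := by simp

lemma Equiv.Perm.inv_apply_self (σ : Equiv.Perm ℕ) (x : ℕ) : σ⁻¹ (σ x) = x := by simp

lemma unionOf_cons (S : Finset ℕ) (t : PSeq) : unionOf (S :: t) = S ∪ unionOf t := rfl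

lemma mem_unionOf {l : PSeq} {x : ℕ} : x ∈ unionOf l ↔ ∃ S ∈ l, x ∈ S := by
  induction l with
  | nil => simp [unionOf]
  | cons S t ih => rw [unionOf_cons]; simp [Finset.mem_union, ih]

lemma packed_cons {S : Finset ℕ} {t : PSeq} :
    Packed (S :: t) ↔ (∀ T ∈ t, Disjoint S T) ∧ S ≠ ∅ ∧ Packed t := by
  unfold Packed
  rw [List.pairwise_cons]
  simp only [List.mem_cons]
  constructor
  · rintro ⟨⟨h1, h2⟩, h3⟩
    exact ⟨h1, h3 S (Or.inl rfl), h2, fun T hT => h3 T (Or.inr hT)⟩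
  · rintro ⟨h1, h2, h3, h4⟩
    exact ⟨⟨h1, h3⟩, fun T hT => hT.elim (fun h => h ▸ h2) (h4 T)⟩

lemma disjoint_unionOf {S : Finset ℕ} {t : PSeq} (h : ∀ T ∈ t, Disjoint S T) :
    Disjoint S (unionOf t) := by
  rw [Finset.disjoint_left]
  intro a ha hat
  obtain ⟨T, hT, haT⟩ := mem_unionOf.1 hat
  exact (Finset.disjoint_left.1 (h T hT)) ha haT

lemma card_unionOf {l : PSeq} (h : Packed l) :
    (unionOf l).card = (l.map Finset.card).sum := by
  induction l with
  | nil => simp [unionOf]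
  | cons S t ih =>
    rw [packed_cons] at h
    rw [unionOf_cons, Finset.card_union_of_disjoint (disjoint_unionOf h.1),
      List.map_cons, List.sum_cons, ih h.2.2]

/-- The list of consecutive intervals starting after `a` with lengths `c`. -/
def blocks : ℕ → List ℕ → PSeq
  | _, [] => []
  | a, c :: cs => Finset.Icc (a + 1) (a + c) :: blocks (a + c) cs

lemma unionOf_blocks (c : List ℕ) : ∀ a, unionOf (blocks a c) = Finset.Icc (a + 1) (a + c.sum) := by
  induction c with
  | nil => intro a; simp [blocks, unionOf]
  | cons c cs ih =>
    intro a
    rw [blocks, unionOf_cons, ih]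
    ext x
    simp only [Finset.mem_union, Finset.mem_Icc, List.sum_cons]
    omega

lemma mem_blocks {c : List ℕ} {S : Finset ℕ} : ∀ {a : ℕ}, S ∈ blocks a c →
    ∃ m, m < c.length ∧
      S = Finset.Icc (a + (c.take m).sum + 1) (a + (c.take (m + 1)).sum) := by
  induction c with
  | nil => intro a h; simp [blocks] at h
  | cons c cs ih =>
    intro a h
    rw [blocks, List.mem_cons] at h
    rcases h with h | h
    · refine ⟨0, by simp, ?_⟩
      simpa using h
    · obtain ⟨m, hm, hS⟩ := ih h
      refine ⟨m + 1, by simpa using hm, ?_⟩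
      rw [hS]
      simp only [List.take_succ_cons, List.sum_cons]
      congr 1 <;> omega

lemma sum_take_le (C : List ℕ) (m : ℕ) : (C.take m).sum ≤ C.sum := by
  conv_rhs => rw [← List.sum_take_add_sum_drop C m]
  exact Nat.le_add_right _ _

lemma sum_take_mono (C : List ℕ) {m m' : ℕ} (h : m ≤ m') :
    (C.take m).sum ≤ (C.take m').sum := by
  have h1 : C.take m = (C.take m').take m := by
    rw [List.take_take, Nat.min_eq_left h]
  rw [h1]
  exact sum_take_le _ _

lemma eq_blocks : ∀ (l : PSeq) (a : ℕ), Packed l → Increasing l →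
    unionOf l = Finset.Icc (a + 1) (a + (l.map Finset.card).sum) →
    l = blocks a (l.map Finset.card) := by
  intro l
  induction l with
  | nil => intros; simp [blocks]
  | cons S t ih =>
    intro a hP hI hU
    rw [packed_cons] at hP
    obtain ⟨hdisj, hSne, hPt⟩ := hP
    have hIt : Increasing t := (List.pairwise_cons.1 hI).2
    have hlt : ∀ s ∈ S, ∀ x ∈ unionOf t, s < x := by
      intro s hs x hx
      obtain ⟨T, hT, hxT⟩ := mem_unionOf.1 hx
      exact (List.pairwise_cons.1 hI).1 T hT s hs x hxT
    have hd : Disjoint S (unionOf t) := disjoint_unionOf hdisj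
    rw [unionOf_cons] at hU
    rw [List.map_cons, List.sum_cons] at hU
    have hne : S.Nonempty := Finset.nonempty_iff_ne_empty.2 hSne
    have hScard : 1 ≤ S.card := Finset.card_pos.2 hne
    have hsub : S ⊆ Finset.Icc (a + 1) (a + (S.card + (t.map Finset.card).sum)) := by
      intro x hx
      rw [← hU]
      exact Finset.mem_union_left _ hx
    have hdc : ∀ x s, s ∈ S → a + 1 ≤ x → x ≤ s → x ∈ S := by
      intro x s hs hx1 hxs
      have hs2 := Finset.mem_Icc.1 (hsub hs)
      have hxI : x ∈ S ∪ unionOf t := by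
        rw [hU, Finset.mem_Icc]
        omega
      rcases Finset.mem_union.1 hxI with h | h
      · exact h
      · exact absurd (hlt s hs x h) (by omega)
    have hSeq : S = Finset.Icc (a + 1) (S.max' hne) := by
      ext x
      rw [Finset.mem_Icc]
      constructor
      · intro hx
        exact ⟨(Finset.mem_Icc.1 (hsub hx)).1, S.le_max' x hx⟩
      · rintro ⟨h1, h2⟩
        exact hdc x _ (S.max'_mem hne) h1 h2
    have hMcard : S.max' hne = a + S.card := by
      have hcc : S.card = (Finset.Icc (a + 1) (S.max' hne)).card := by rw [← hSeq]
      rw [Nat.card_Icc] at hcc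
      have hM1 : a + 1 ≤ S.max' hne := (Finset.mem_Icc.1 (hsub (S.max'_mem hne))).1
      omega
    have hUt : unionOf t = Finset.Icc (a + S.card + 1)
        (a + S.card + (t.map Finset.card).sum) := by
      ext x
      rw [Finset.mem_Icc]
      constructor
      · intro hx
        have hxU : x ∈ S ∪ unionOf t := Finset.mem_union_right _ hx
        rw [hU, Finset.mem_Icc] at hxU
        have hxS : x ∉ S := Finset.disjoint_right.1 hd hx
        rw [hSeq, Finset.mem_Icc, hMcard] at hxS
        push_neg at hxS
        omega
      · rintro ⟨h1, h2⟩
        have hxU : x ∈ S ∪ unionOf t := by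
          rw [hU, Finset.mem_Icc]
          omega
        rcases Finset.mem_union.1 hxU with h | h
        · rw [hSeq, Finset.mem_Icc, hMcard] at h
          omega
        · exact h
    have hrec := ih (a + S.card) hPt hIt (by rw [hUt])
    rw [List.map_cons, blocks, ← hrec, ← hMcard, ← hSeq]

lemma flatMap_blocks (g : Finset ℕ → List ℕ) : ∀ (c : List ℕ) (a : ℕ),
    (∀ x ∈ c, 0 < x) →
    (∀ u l, 0 < l → Finset.Icc (u + 1) (u + l) ∈ blocks a c →
      g (Finset.Icc (u + 1) (u + l)) = List.range' (u + 1) l) →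
    (blocks a c).flatMap g = List.range' (a + 1) c.sum := by
  intro c
  induction c with
  | nil => intro a _ _; simp [blocks]
  | cons c cs ih =>
    intro a hpos h
    rw [blocks, List.flatMap_cons]
    rw [h a c (hpos c List.mem_cons_self) (by rw [blocks]; exact List.mem_cons_self)]
    rw [ih (a + c) (fun x hx => hpos x (List.mem_cons_of_mem _ hx))
      (fun u l hl hm => h u l hl (by rw [blocks]; exact List.mem_cons_of_mem _ hm))]
    have hra := List.range'_append (s := a + 1) (m := c) (n := cs.sum) (step := 1)
    rw [List.sum_cons]
    have h1 : a + 1 + 1 * c = a + c + 1 := by omega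
    have h2 : cs.sum + c = c + cs.sum := by omega
    rw [h1] at hra
    exact hra

lemma lt_of_chain {f : ℕ → ℕ} {u l : ℕ}
    (h : ∀ i, u + 1 ≤ i → i + 1 ≤ u + l → f i < f (i + 1)) :
    ∀ y x, u + 1 ≤ x → x < y → y ≤ u + l → f x < f y := by
  intro y
  induction y with
  | zero => intro x _ h2 _; exact absurd h2 (by omega)
  | succ m ihm =>
    intro x h1 h2 h3
    rcases Nat.lt_or_ge x m with h' | h'
    · exact lt_trans (ihm x h1 h' (by omega)) (h m (by omega) h3)
    · have hxm : x = m := by omega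
      subst hxm
      exact h x h1 h3

lemma rel_of_pairwise {l : List ℕ} {T : ℕ → ℕ → Prop} (h1 : l.Pairwise (· < ·))
    (h2 : l.Pairwise T) {a b : ℕ} (ha : a ∈ l) (hb : b ∈ l) (hab : a < b) : T a b := by
  obtain ⟨i, hi⟩ := List.mem_iff_get.1 ha
  obtain ⟨j, hj⟩ := List.mem_iff_get.1 hb
  rcases lt_trichotomy i j with h | h | h
  · have := List.pairwise_iff_get.1 h2 i j h
    rwa [hi, hj] at this
  · rw [h, hj] at hi
    omega
  · have := List.pairwise_iff_get.1 h1 j i h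
    rw [hi, hj] at this
    omega

lemma isPermOn_mem {n : ℕ} {σ : Equiv.Perm ℕ} (hσ : IsPermOn n σ) :
    ∀ x, x ∈ Finset.Icc 1 n ↔ σ x ∈ Finset.Icc 1 n := by
  intro x
  constructor
  · intro hx
    by_contra h
    have h1 : σ (σ x) = σ x := hσ _ h
    have h2 : σ x = x := σ.injective h1
    rw [h2] at h
    exact h hx
  · intro hx
    by_contra h
    rw [hσ x h] at hx
    exact h hx

lemma packed_permList (n : ℕ) (σ : Equiv.Perm ℕ) : Packed (permList n σ) := by
  constructor
  · rw [permList, List.pairwise_map]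
    refine (List.pairwise_lt_range (n := n)).imp ?_
    intro i j hij
    refine Finset.disjoint_singleton.2 fun he => ?_
    have := σ.injective he
    omega
  · intro S hS
    rw [permList] at hS
    obtain ⟨i, _, rfl⟩ := List.mem_map.1 hS
    exact Finset.singleton_ne_empty _

lemma filter_piece {n u l : ℕ} {σ : Equiv.Perm ℕ}
    (hn : ∀ x, x ∈ Finset.Icc 1 n ↔ σ x ∈ Finset.Icc 1 n)
    (hsub : Finset.Icc (u + 1) (u + l) ⊆ Finset.Icc 1 n)
    (hmono : ∀ x y, x ∈ Finset.Icc (u + 1) (u + l) → y ∈ Finset.Icc (u + 1) (u + l) →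
      x < y → σ⁻¹ x < σ⁻¹ y) :
    ((List.range n).map (fun i => σ (i + 1))).filter (· ∈ Finset.Icc (u + 1) (u + l)) =
      List.range' (u + 1) l := by
  classical
  set S := Finset.Icc (u + 1) (u + l) with hS
  have hfm : ((List.range n).map (fun i => σ (i + 1))).filter (· ∈ S) =
      ((List.range n).filter (fun i => σ (i + 1) ∈ S)).map (fun i => σ (i + 1)) := by
    rw [List.filter_map]
    rfl
  have hJlt : ((List.range n).filter (fun i => σ (i + 1) ∈ S)).Pairwise (· < ·) :=
    List.Pairwise.sublist List.filter_sublist List.pairwise_lt_range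
  have hmem : ∀ i ∈ (List.range n).filter (fun i => σ (i + 1) ∈ S), σ (i + 1) ∈ S := by
    intro i hi
    have := (List.mem_filter.1 hi).2
    simpa using this
  have hF : (((List.range n).filter (fun i => σ (i + 1) ∈ S)).map
      (fun i => σ (i + 1))).Pairwise (· < ·) := by
    rw [List.pairwise_map]
    refine hJlt.imp_of_mem ?_
    intro i j hi hj hij
    by_contra hnot
    have hne : σ (i + 1) ≠ σ (j + 1) := fun he => by
      have := σ.injective he
      omega
    have hlt2 : σ (j + 1) < σ (i + 1) := by omega
    have hmm := hmono _ _ (hmem j hj) (hmem i hi) hlt2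
    rw [Equiv.Perm.inv_apply_self, Equiv.Perm.inv_apply_self] at hmm
    omega
  have hFnd : (((List.range n).filter (fun i => σ (i + 1) ∈ S)).map
      (fun i => σ (i + 1))).Nodup := hF.imp (fun h => Nat.ne_of_lt h)
  have hL : ((List.range n).map (fun i => σ (i + 1))).toFinset = Finset.Icc 1 n := by
    ext x
    simp only [List.mem_toFinset, List.mem_map, List.mem_range]
    constructor
    · rintro ⟨i, hi, rfl⟩
      exact (hn (i + 1)).1 (Finset.mem_Icc.2 (by omega))
    · intro hx
      have h1 : σ⁻¹ x ∈ Finset.Icc 1 n := (hn (σ⁻¹ x)).2 (by rwa [Equiv.Perm.apply_inv_self])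
      rw [Finset.mem_Icc] at h1
      refine ⟨σ⁻¹ x - 1, by omega, ?_⟩
      rw [show σ⁻¹ x - 1 + 1 = σ⁻¹ x by omega, Equiv.Perm.apply_inv_self]
  have htf : (((List.range n).filter (fun i => σ (i + 1) ∈ S)).map
      (fun i => σ (i + 1))).toFinset = S := by
    rw [← hfm, List.toFinset_filter, hL]
    simp only [decide_eq_true_eq]
    rw [Finset.filter_mem_eq_inter]
    exact Finset.inter_eq_right.2 hsub
  have hrtf : (List.range' (u + 1) l).toFinset = S := by
    ext x
    simp only [List.mem_toFinset, List.mem_range'_1, hS, Finset.mem_Icc]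
    omega
  have hperm := List.perm_of_nodup_nodup_toFinset_eq hFnd (List.nodup_range')
    (htf.trans hrtf.symm)
  haveI : IsAntisymm ℕ (· < ·) := ⟨fun a b h h' => absurd h' (by omega)⟩
  rw [hfm]
  exact List.Perm.eq_of_pairwise (fun a b _ _ h h' => absurd h' (by omega)) hF List.pairwise_lt_range' hperm

lemma inter_singleton_filter (S : Finset ℕ) : ∀ l : List ℕ,
    ((l.map fun x => S ∩ ({x} : Finset ℕ)).filter fun U => U ≠ ∅) =
      (l.filter (· ∈ S)).map fun x => ({x} : Finset ℕ) := by
  intro l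
  induction l with
  | nil => simp
  | cons x t ih =>
    by_cases hx : x ∈ S
    · simp only [List.map_cons, List.filter_cons, Finset.inter_singleton_of_mem hx, hx, ih]
      simp
    · simp only [List.map_cons, List.filter_cons, Finset.inter_singleton_of_notMem hx, hx, ih]
      simp

lemma refines_perm (w : PSeq) (n : ℕ) (σ : Equiv.Perm ℕ) :
    refines w (permList n σ) =
      (w.flatMap fun S => ((List.range n).map fun i => σ (i + 1)).filter (· ∈ S)).map
        fun x => ({x} : Finset ℕ) := by
  induction w with
  | nil => simp [refines]
  | cons S t ih =>
    rw [refines, List.flatMap_cons, ← refines, List.flatMap_cons, List.map_append, ih]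
    congr 1
    rw [permList, List.map_map]
    have h := inter_singleton_filter S ((List.range n).map fun i => σ (i + 1))
    rw [List.map_map] at h
    simpa [Function.comp_def] using h

lemma mk_inj (k : Type) [CommRing k] [Nontrivial k] {A B : PSeq} (hB : Packed B) :
    mk k A = mk k B ↔ A = B := by
  constructor
  · intro h
    rw [mk, mk, dif_pos hB] at h
    split_ifs at h with hA
    · have := (Finsupp.single_left_inj (one_ne_zero : (1 : k) ≠ 0)).1 h
      exact congrArg Subtype.val this
    · exact absurd h.symm fun hz => one_ne_zero (Finsupp.single_eq_zero.1 hz)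
  · rintro rfl
    rfl

end Aux16

/-- Let `(S_1,…,S_k)` be an increasing ordered partition of
`[n]` of type `(n_1,…,n_k)` and `σ` a permutation of `[n]`. Then
`1_{(S_1,…,S_k)} ∘ 1_σ = 1_{({1},…,{n})}` if and only if
`D(σ⁻¹) ⊆ {n_1, n_1+n_2, …, n_1+⋯+n_{k-1}}`; that is, the `σ` with
`1_{(S_1,…,S_k)} ∘ 1_σ = 1_{({1},…,{n})}` are exactly the inverses of the
permutations with descent set contained in `{n_1, n_1+n_2, …}`. -/
theorem comp_eq_id_iff_descents (k : Type) [CommRing k] [Nontrivial k]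
    (n : ℕ) (w : PackedSeq)
    (hw : unionOf w.1 = Finset.Icc 1 n) (hinc : Increasing w.1)
    (σ : Equiv.Perm ℕ) (hσ : IsPermOn n σ) :
    compL k (Finsupp.single w 1) (mk k (permList n σ)) = mk k (permList n 1)
      ↔ Des n σ⁻¹ ⊆
          {s | ∃ m, 1 ≤ m ∧ m < w.1.length ∧
            s = ((w.1.map Finset.card).take m).sum} := by
  classical
  have hPw := w.2
  set C := w.1.map Finset.card with hC
  have key := isPermOn_mem hσ
  have keyinv : ∀ x, x ∈ Finset.Icc 1 n ↔ σ⁻¹ x ∈ Finset.Icc 1 n := by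
    intro x
    have h := key (σ⁻¹ x)
    rw [Equiv.Perm.apply_inv_self] at h
    exact h.symm
  have hsum : C.sum = n := by
    have h := card_unionOf hPw
    rw [hw, Nat.card_Icc, ← hC] at h
    omega
  have hpos : ∀ x ∈ C, 0 < x := by
    intro x hx
    obtain ⟨S, hS, rfl⟩ := List.mem_map.1 hx
    exact Finset.card_pos.2 (Finset.nonempty_iff_ne_empty.2 (hPw.2 S hS))
  have hblocks : w.1 = blocks 0 C := by
    refine eq_blocks w.1 0 hPw hinc ?_
    rw [hw, ← hC, hsum]
    norm_num
  have hup : unionOf (permList n σ) = Finset.Icc 1 n := by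
    ext x
    rw [mem_unionOf]
    simp only [permList, List.mem_map, List.mem_range]
    constructor
    · rintro ⟨S, ⟨i, hi, rfl⟩, hx⟩
      rw [Finset.mem_singleton] at hx
      subst hx
      exact (key _).1 (Finset.mem_Icc.2 (by omega))
    · intro hx
      have h1 := (keyinv x).1 hx
      rw [Finset.mem_Icc] at h1
      refine ⟨{x}, ⟨σ⁻¹ x - 1, by omega, ?_⟩, Finset.mem_singleton_self x⟩
      rw [show σ⁻¹ x - 1 + 1 = σ⁻¹ x by omega, Equiv.Perm.apply_inv_self]
  have hcomp : compL k (Finsupp.single w 1) (mk k (permList n σ)) =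
      mk k (refines w.1 (permList n σ)) := by
    rw [mk, dif_pos (packed_permList n σ)]
    simp only [compL, Finsupp.lsum_single, LinearMap.toSpanSingleton_apply, one_smul]
    rw [compB, if_pos]
    rw [hw, hup]
  rw [hcomp, mk_inj k (packed_permList n 1)]
  rw [refines_perm]
  have hp1 : permList n 1 = ((List.range n).map fun i => i + 1).map
      fun x => ({x} : Finset ℕ) := by
    rw [permList, List.map_map]
    rfl
  rw [hp1, (List.map_injective_iff.mpr Finset.singleton_injective).eq_iff]
  have hr1 : (List.range n).map (fun i => i + 1) = List.range' 1 n := by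
    rw [List.range'_eq_map_range]
    exact List.map_congr_left fun x _ => by omega
  rw [hr1]
  constructor
  · intro hflat i hi
    simp only [Des, Set.mem_setOf_eq] at hi
    obtain ⟨hi1, hi2, hdes⟩ := hi
    by_contra hnP
    simp only [Set.mem_setOf_eq, not_exists, not_and] at hnP
    have hiU : i ∈ unionOf w.1 := by
      rw [hw, Finset.mem_Icc]
      omega
    rw [hblocks] at hiU
    obtain ⟨S, hSb, hiS⟩ := mem_unionOf.1 hiU
    obtain ⟨m, hm, hSeq⟩ := mem_blocks hSb
    have hlenC : C.length = w.1.length := by rw [hC, List.length_map]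
    have hi1S : i + 1 ∈ S := by
      rw [hSeq, Finset.mem_Icc] at hiS ⊢
      refine ⟨by omega, ?_⟩
      by_contra hcon
      push_neg at hcon
      have hieq : i = (C.take (m + 1)).sum := by omega
      have hmlt : m + 1 < C.length := by
        by_contra hh
        push_neg at hh
        have : (C.take (m + 1)).sum = n := by
          rw [List.take_of_length_le hh]
          exact hsum
        omega
      exact hnP (m + 1) (by omega) (by omega) hieq
    have hSmem : S ∈ w.1 := by rw [hblocks]; exact hSb
    have hsubl : (((List.range n).map fun i => σ (i + 1)).filter (· ∈ S)).Sublist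
        (List.range' 1 n) := by
      rw [← hflat]
      have hmm : (((List.range n).map fun i => σ (i + 1)).filter (· ∈ S)) ∈
          w.1.map fun S => ((List.range n).map fun i => σ (i + 1)).filter (· ∈ S) :=
        List.mem_map_of_mem hSmem
      rw [List.flatMap_def]
      exact List.sublist_flatten_of_mem hmm
    have hFlt : (((List.range n).map fun i => σ (i + 1)).filter (· ∈ S)).Pairwise (· < ·) :=
      List.Pairwise.sublist hsubl List.pairwise_lt_range'
    rw [List.filter_map, List.pairwise_map] at hFlt
    have hJlt : ((List.range n).filter ((fun x => decide (x ∈ S)) ∘ fun i =>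
        σ (i + 1))).Pairwise (· < ·) :=
      List.Pairwise.sublist List.filter_sublist List.pairwise_lt_range
    have hiI := (keyinv i).1 (Finset.mem_Icc.2 (by omega))
    have hi1I := (keyinv (i + 1)).1 (Finset.mem_Icc.2 (by omega))
    rw [Finset.mem_Icc] at hiI hi1I
    have hmema : σ⁻¹ (i + 1) - 1 ∈ (List.range n).filter ((fun x => decide (x ∈ S)) ∘ fun i =>
        σ (i + 1)) := by
      rw [List.mem_filter]
      refine ⟨List.mem_range.2 (by omega), ?_⟩
      simp only [Function.comp, decide_eq_true_eq]
      rw [show σ⁻¹ (i + 1) - 1 + 1 = σ⁻¹ (i + 1) by omega, Equiv.Perm.apply_inv_self]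
      exact hi1S
    have hmemb : σ⁻¹ i - 1 ∈ (List.range n).filter ((fun x => decide (x ∈ S)) ∘ fun i =>
        σ (i + 1)) := by
      rw [List.mem_filter]
      refine ⟨List.mem_range.2 (by omega), ?_⟩
      simp only [Function.comp, decide_eq_true_eq]
      rw [show σ⁻¹ i - 1 + 1 = σ⁻¹ i by omega, Equiv.Perm.apply_inv_self]
      exact hiS
    have hfin := rel_of_pairwise hJlt hFlt hmema hmemb (by omega)
    rw [show σ⁻¹ (i + 1) - 1 + 1 = σ⁻¹ (i + 1) by omega,
      show σ⁻¹ i - 1 + 1 = σ⁻¹ i by omega, Equiv.Perm.apply_inv_self,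
      Equiv.Perm.apply_inv_self] at hfin
    omega
  · intro hD
    rw [hblocks]
    have hmain := flatMap_blocks (fun S => ((List.range n).map fun i => σ (i + 1)).filter
      (· ∈ S)) C 0 hpos ?_
    · rw [hmain, hsum]
    intro u l hl hmem
    have hSsub : Finset.Icc (u + 1) (u + l) ⊆ Finset.Icc 1 n := by
      intro x hx
      have hxx : x ∈ unionOf (blocks 0 C) := mem_unionOf.2 ⟨_, hmem, hx⟩
      rw [unionOf_blocks, hsum] at hxx
      simpa using hxx
    refine filter_piece key hSsub ?_
    intro x y hx hy hxy
    rw [Finset.mem_Icc] at hx hy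
    refine lt_of_chain ?_ y x hx.1 hxy hy.2
    intro i hi1 hi2
    have hiS : i ∈ Finset.Icc (u + 1) (u + l) := Finset.mem_Icc.2 ⟨hi1, by omega⟩
    have hi1S : i + 1 ∈ Finset.Icc (u + 1) (u + l) := Finset.mem_Icc.2 ⟨by omega, hi2⟩
    have h1n := Finset.mem_Icc.1 (hSsub hiS)
    have h2n := Finset.mem_Icc.1 (hSsub hi1S)
    have hiP : i ∉ {s | ∃ m, 1 ≤ m ∧ m < w.1.length ∧ s = (C.take m).sum} := by
      rintro ⟨m, hm1, hm2, hmeq⟩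
      obtain ⟨j, hj, hSeq⟩ := mem_blocks hmem
      have hiS' := hiS
      have hi1S' := hi1S
      rw [hSeq, Finset.mem_Icc] at hiS' hi1S'
      rcases le_or_gt m j with h | h
      · have := sum_take_mono C h
        omega
      · have := sum_take_mono C (show j + 1 ≤ m from h)
        omega
    have hnd : i ∉ Des n σ⁻¹ := fun hdi => hiP (hD hdi)
    simp only [Des, Set.mem_setOf_eq, not_and, not_lt] at hnd
    have hle := hnd (by omega) (by omega)
    have hne : σ⁻¹ i ≠ σ⁻¹ (i + 1) := fun he => by
      have := (Equiv.injective σ⁻¹) he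
      omega
    omega

end TwistedDescent

end
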